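/- Let {M_k}_{k=1}^N be Pauli measurements on a graph state |G⟩ with M_k = χ_k S_k (S_k stabilizer elements, χ_k ∈ {±1}), satisfying the even-occurrence condition at every vertex and ∏_k χ_k = −1. Define the Bell operator B = ∑_{k=1}^N χ_k M_k. Then ⟨G| B |G⟩ = N, while for every deterministic local hidden variable assignment h : V × {X,Y,Z} → {±1}, the value ∑_{k=1}^N χ_k ∏_{v:(M_k)_v≠I} h(v,(M_k)_v) is at most N − 2. -/

import Mathlib

open scoped Classical

inductive Pauli | I | X | Y | Z
deriving DecidableEq

noncomputable def pauliMat : Pauli → Matrix (Fin 2) (Fin 2) ℂ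
  | Pauli.I => 1
  | Pauli.X => !![0, 1; 1, 0]
  | Pauli.Y => !![0, -Complex.I; Complex.I, 0]
  | Pauli.Z => !![1, 0; 0, -1]

noncomputable def pauliProd {V : Type} [Fintype V] [DecidableEq V] (σ : V → Pauli) :
    Matrix (V → Fin 2) (V → Fin 2) ℂ :=
  fun f g => ∏ v, pauliMat (σ v) (f v) (g v)

noncomputable def graphGen {V : Type} [Fintype V] [DecidableEq V] (G : SimpleGraph V) (v : V) :
    Matrix (V → Fin 2) (V → Fin 2) ℂ :=
  pauliProd (fun u => if u = v then Pauli.X else if G.Adj u v then Pauli.Z else Pauli.I)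

noncomputable def graphState {V : Type} [Fintype V] [DecidableEq V] (G : SimpleGraph V) :
    (V → Fin 2) → ℂ :=
  fun f => (-1 : ℂ) ^ (∑ e ∈ G.edgeFinset,
      Sym2.lift ⟨fun u v => (f u : ℕ) * (f v : ℕ), fun u v => Nat.mul_comm _ _⟩ e) /
    (Real.sqrt (2 ^ Fintype.card V) : ℂ)

noncomputable def expVal {V : Type} [Fintype V] [DecidableEq V]
    (ψ : (V → Fin 2) → ℂ) (P : Matrix (V → Fin 2) (V → Fin 2) ℂ) : ℂ :=
  ∑ f, ∑ g, (starRingEnd ℂ) (ψ f) * P f g * ψ g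

/-!
Every `χ k • M k` lies in the stabilizer group of the graph state, so it fixes the state and, the
state being normalized, contributes expectation `1`. The state is fixed by each generator `K_v`:
flipping bit `v` of `f` multiplies the phase `(-1) ^ ∑_{uw ∈ E} f u f w` by
`∏_{u ∼ v} (-1) ^ f u`, which is exactly the sign produced by the `Z` factors of `K_v`.

On the local side each term `χ k ∏_v h(v, M k v)` is `±1`. By the even-occurrence condition the
values `h(v, σ)` cancel in pairs in the product of all terms, which is therefore `∏ χ k = -1`;
so some term equals `-1` and the sum is at most `N - 2`.
-/

open Finset Matrix

theorem Finset.prod_comp_eq_one_of_even_card_fiber {ι α M : Type*} [Fintype ι] [DecidableEq α]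
    [CommMonoid M] (f : ι → α) (w : α → M) (hw : ∀ a, w a ^ 2 = 1)
    (heven : ∀ a, w a ≠ 1 → Even #{i | f i = a}) :
    ∏ i, w (f i) = 1 := by
  rw [prod_comp]
  refine prod_eq_one fun a _ => ?_
  by_cases ha : w a = 1
  · rw [ha, one_pow]
  · obtain ⟨m, hm⟩ := (heven a ha).two_dvd
    rw [hm, pow_mul, hw, one_pow]

theorem Int.sum_le_card_sub_two_of_prod_eq_neg_one {ι : Type*} [Fintype ι] (t : ι → ℤ)
    (ht : ∀ i, t i = 1 ∨ t i = -1) (hprod : ∏ i, t i = -1) :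
    ∑ i, t i ≤ Fintype.card ι - 2 := by
  obtain ⟨j, hj⟩ : ∃ j, t j = -1 := by
    by_contra! hne
    simp [fun i => (ht i).resolve_right (hne i)] at hprod
  have hrest : ∑ i ∈ univ.erase j, t i ≤ ∑ i ∈ univ.erase j, 1 :=
    sum_le_sum fun i _ => by rcases ht i with h | h <;> omega
  rw [← add_sum_erase _ _ (mem_univ j), hj]
  rw [sum_const, card_erase_of_mem (mem_univ j), card_univ, nsmul_one,
    Nat.cast_sub (Fintype.card_pos_iff.mpr ⟨j⟩)] at hrest
  push_cast at hrest
  omega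

theorem sum_mul_prod_le_card_sub_two_of_even_card_fiber {ι V α : Type*} [Fintype ι] [Fintype V]
    [DecidableEq α] (M : ι → V → α) (χ : ι → ℤ) (w : V → α → ℤ)
    (hχ : ∀ k, χ k = 1 ∨ χ k = -1) (hw : ∀ v a, w v a = 1 ∨ w v a = -1)
    (heven : ∀ v a, w v a ≠ 1 → Even #{k | M k v = a}) (hprod : ∏ k, χ k = -1) :
    ∑ k, χ k * ∏ v, w v (M k v) ≤ Fintype.card ι - 2 := by
  have hw_sq (v : V) (a : α) : w v a ^ 2 = 1 := sq_eq_one_iff.mpr (hw v a)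
  have hsign (k : ι) : (χ k * ∏ v, w v (M k v)) ^ 2 = 1 := by
    rw [mul_pow, ← prod_pow, sq_eq_one_iff.mpr (hχ k), prod_eq_one fun v _ => hw_sq v _, one_mul]
  have hlocal (v : V) : ∏ k, w v (M k v) = 1 :=
    prod_comp_eq_one_of_even_card_fiber (M · v) (w v) (hw_sq v) (heven v)
  have hsign_prod : ∏ k, χ k * ∏ v, w v (M k v) = -1 := by
    rw [prod_mul_distrib, hprod, prod_comm, prod_eq_one fun v _ => hlocal v, mul_one]
  exact Int.sum_le_card_sub_two_of_prod_eq_neg_one _ (fun k => sq_eq_one_iff.mp (hsign k))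
    hsign_prod

def Matrix.mulVecStabilizer {n R : Type*} [Fintype n] [DecidableEq n] [Semiring R]
    (ψ : n → R) : Submonoid (Matrix n n R) where
  carrier := {A | A *ᵥ ψ = ψ}
  mul_mem' {A B} (hA : A *ᵥ ψ = ψ) (hB : B *ᵥ ψ = ψ) :=
    show (A * B) *ᵥ ψ = ψ by rw [← mulVec_mulVec, hB, hA]
  one_mem' := one_mulVec ψ

section Sym2Graph

variable {V : Type*} [DecidableEq V]

theorem SimpleGraph.incidenceFinset_eq_map_neighborFinset (G : SimpleGraph V) (v : V)
    [Fintype (G.neighborSet v)] :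
    G.incidenceFinset v = (G.neighborFinset v).map (Sym2.mkEmbedding v) := by
  ext e
  induction e using Sym2.ind with
  | _ a b =>
    simp only [SimpleGraph.mem_incidenceFinset, SimpleGraph.mk'_mem_incidenceSet_iff, mem_map,
      SimpleGraph.mem_neighborFinset, Sym2.mkEmbedding_apply, Sym2.eq_iff]
    constructor
    · rintro ⟨h, rfl | rfl⟩
      · exact ⟨b, h, Or.inl ⟨rfl, rfl⟩⟩
      · exact ⟨a, h.symm, Or.inr ⟨rfl, rfl⟩⟩
    · rintro ⟨w, h, ⟨rfl, rfl⟩ | ⟨rfl, rfl⟩⟩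
      · exact ⟨h, Or.inl rfl⟩
      · exact ⟨h.symm, Or.inr rfl⟩

theorem pauliMat_graphGen_factor (G : SimpleGraph V) (v u : V) (a b : Fin 2) :
    pauliMat (if u = v then Pauli.X else if G.Adj u v then Pauli.Z else Pauli.I) a b =
      if b = (if u = v then a + 1 else a) then (if G.Adj u v then (-1) ^ (a : ℕ) else 1)
      else 0 := by
  by_cases huv : u = v
  · subst huv
    fin_cases a <;> fin_cases b <;> simp [pauliMat]
  · by_cases hadj : G.Adj u v <;> fin_cases a <;> fin_cases b <;> simp [pauliMat, huv, hadj]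

/-- The exponent of the phase of `graphState` contributed by the edge `e`. -/
def edgeProduct (f : V → Fin 2) : Sym2 V → ℕ :=
  Sym2.lift ⟨fun u w => (f u : ℕ) * (f w : ℕ), fun _ _ => Nat.mul_comm _ _⟩

theorem edgeProduct_update_of_notMem (f : V → Fin 2) (v : V) (a : Fin 2) {e : Sym2 V}
    (he : v ∉ e) : edgeProduct (Function.update f v a) e = edgeProduct f e := by
  induction e using Sym2.ind with
  | _ x y =>
    simp only [Sym2.mem_iff, not_or] at he
    simp [edgeProduct, Function.update_of_ne (Ne.symm he.1), Function.update_of_ne (Ne.symm he.2)]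

theorem edgeProduct_update_flip_add (f : V → Fin 2) {u v : V} (h : u ≠ v) :
    edgeProduct (Function.update f v (f v + 1)) s(v, u) + edgeProduct f s(v, u) = f u := by
  have hflip : ∀ a : Fin 2, ((a + 1 : Fin 2) : ℕ) + a = 1 := by decide
  simp [edgeProduct, Function.update_of_ne h, ← add_mul, hflip]

end Sym2Graph

section GraphState

variable {V : Type} [Fintype V] [DecidableEq V] (G : SimpleGraph V)

theorem graphGen_apply (v : V) (f g : V → Fin 2) :
    graphGen G v f g = if g = Function.update f v (f v + 1)
      then ∏ u ∈ G.neighborFinset v, (-1 : ℂ) ^ (f u : ℕ) else 0 := by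
  simp only [graphGen, pauliProd, pauliMat_graphGen_factor, Fintype.prod_ite_zero]
  congr 1
  · simp only [funext_iff, Function.update_apply]
    exact propext <| forall_congr' fun u => by by_cases h : u = v <;> simp [h]
  · rw [← prod_filter, SimpleGraph.neighborFinset_eq_filter]
    simp only [G.adj_comm]

theorem graphGen_mulVec_apply (v : V) (ψ : (V → Fin 2) → ℂ) (f : V → Fin 2) :
    (graphGen G v *ᵥ ψ) f =
      (∏ u ∈ G.neighborFinset v, (-1 : ℂ) ^ (f u : ℕ)) * ψ (Function.update f v (f v + 1)) := by
  simp [mulVec, dotProduct, graphGen_apply]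

theorem neg_one_pow_sum_edgeProduct_update_flip (f : V → Fin 2) (v : V) :
    (-1 : ℂ) ^ (∑ e ∈ G.edgeFinset, edgeProduct (Function.update f v (f v + 1)) e) =
      (∏ u ∈ G.neighborFinset v, (-1 : ℂ) ^ (f u : ℕ)) *
        (-1) ^ (∑ e ∈ G.edgeFinset, edgeProduct f e) := by
  suffices (-1 : ℂ) ^ (∑ e ∈ G.edgeFinset, edgeProduct (Function.update f v (f v + 1)) e +
      ∑ e ∈ G.edgeFinset, edgeProduct f e) = ∏ u ∈ G.neighborFinset v, (-1 : ℂ) ^ (f u : ℕ) by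
    rw [← this, pow_add, mul_assoc, ← mul_pow, neg_one_mul, neg_neg, one_pow, mul_one]
  rw [← sum_add_distrib, ← prod_pow_eq_pow_sum, ← prod_filter_mul_prod_filter_not _ (v ∈ ·),
    ← SimpleGraph.incidenceFinset_eq_filter, G.incidenceFinset_eq_map_neighborFinset, prod_map]
  rw [prod_eq_one (s := {e ∈ G.edgeFinset | v ∉ e}), mul_one]
  · refine prod_congr rfl fun u hu => ?_
    rw [Sym2.mkEmbedding_apply, edgeProduct_update_flip_add]
    exact ((G.mem_neighborFinset v u).mp hu).ne'
  · intro e he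
    rw [edgeProduct_update_of_notMem f v _ (mem_filter.mp he).2, ← two_mul, pow_mul]
    simp

theorem graphState_update_flip (f : V → Fin 2) (v : V) :
    graphState G (Function.update f v (f v + 1)) =
      (∏ u ∈ G.neighborFinset v, (-1 : ℂ) ^ (f u : ℕ)) * graphState G f := by
  have := neg_one_pow_sum_edgeProduct_update_flip G f v
  unfold edgeProduct at this
  simp only [graphState, this, mul_div_assoc]

theorem graphGen_mulVec_graphState (v : V) : graphGen G v *ᵥ graphState G = graphState G := by
  funext f
  rw [graphGen_mulVec_apply, graphState_update_flip, ← mul_assoc, ← prod_mul_distrib,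
    prod_eq_one fun u _ => by rw [← mul_pow, neg_one_mul, neg_neg, one_pow], one_mul]

theorem graphState_mulVec_of_mem_closure {A : Matrix (V → Fin 2) (V → Fin 2) ℂ}
    (hA : A ∈ Submonoid.closure (Set.range (graphGen G))) :
    A *ᵥ graphState G = graphState G :=
  (Submonoid.closure_le (S := Matrix.mulVecStabilizer (graphState G))).mpr
    (Set.range_subset_iff.mpr (graphGen_mulVec_graphState G)) hA

theorem star_graphState_dotProduct_self : star (graphState G) ⬝ᵥ graphState G = 1 := by
  have hterm : ∀ f, star (graphState G f) * graphState G f = ((2 : ℂ) ^ Fintype.card V)⁻¹ := by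
    intro f
    rw [Complex.star_def, Complex.conj_mul']
    simp only [graphState, Complex.norm_div, norm_pow, norm_neg, norm_one, one_pow,
      Complex.norm_real, Real.norm_eq_abs, one_div, Complex.ofReal_inv, inv_pow, _root_.inv_inj]
    rw [abs_of_nonneg (Real.sqrt_nonneg _), ← Complex.ofReal_pow, Real.sq_sqrt (by positivity)]
    norm_cast
  simp only [dotProduct, Pi.star_apply, hterm, sum_const, card_univ, Fintype.card_fun,
    Fintype.card_fin, nsmul_eq_mul]
  push_cast
  exact mul_inv_cancel₀ (pow_ne_zero _ two_ne_zero)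

end GraphState

section ExpVal

variable {V : Type} [Fintype V] [DecidableEq V]

theorem expVal_eq_star_dotProduct_mulVec (ψ : (V → Fin 2) → ℂ)
    (P : Matrix (V → Fin 2) (V → Fin 2) ℂ) : expVal ψ P = star ψ ⬝ᵥ (P *ᵥ ψ) := by
  simp [expVal, dotProduct, mulVec, mul_sum, mul_assoc]

theorem expVal_sum {ι : Type*} (s : Finset ι) (ψ : (V → Fin 2) → ℂ)
    (P : ι → Matrix (V → Fin 2) (V → Fin 2) ℂ) :
    expVal ψ (∑ k ∈ s, P k) = ∑ k ∈ s, expVal ψ (P k) := by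
  simp only [expVal_eq_star_dotProduct_mulVec, sum_mulVec, dotProduct_sum]

theorem expVal_graphState_sum_eq_card {ι : Type*} (G : SimpleGraph V) (s : Finset ι)
    (P : ι → Matrix (V → Fin 2) (V → Fin 2) ℂ)
    (hP : ∀ k ∈ s, P k ∈ Submonoid.closure (Set.range (graphGen G))) :
    expVal (graphState G) (∑ k ∈ s, P k) = #s := by
  rw [expVal_sum, sum_congr rfl fun k hk => ?_, sum_const, nsmul_one]
  rw [expVal_eq_star_dotProduct_mulVec, graphState_mulVec_of_mem_closure G (hP k hk),
    star_graphState_dotProduct_self]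

end ExpVal

/-- Bell inequality from a GHZ-type paradox: the Bell operator `B = ∑ χ k • M k`
has graph-state expectation `N`, while every deterministic LHV assignment gives
value at most `N - 2`. -/
theorem stmt17 {V : Type} [Fintype V] [DecidableEq V] (G : SimpleGraph V) (N : ℕ)
    (M : Fin N → V → Pauli) (χ : Fin N → ℤ)
    (hχ : ∀ k, χ k = 1 ∨ χ k = -1)
    (hstab : ∀ k, ((χ k : ℂ) • pauliProd (M k)) ∈
      Submonoid.closure (Set.range (graphGen G)))
    (heven : ∀ (v : V) (σ : Pauli), σ ≠ Pauli.I →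
      Even (Finset.univ.filter (fun k => M k v = σ)).card)
    (hprod : (∏ k, χ k) = -1) :
    expVal (graphState G) (∑ k, (χ k : ℂ) • pauliProd (M k)) = (N : ℂ) ∧
    ∀ h : V → Pauli → ℤ,
      (∀ (v : V) (σ : Pauli), σ ≠ Pauli.I → h v σ = 1 ∨ h v σ = -1) →
      (∑ k, χ k * ∏ v, if M k v = Pauli.I then 1 else h v (M k v)) ≤ (N : ℤ) - 2 := by
  refine ⟨by simpa using expVal_graphState_sum_eq_card G univ _ fun k _ => hstab k,
    fun h hh => ?_⟩
  set w : V → Pauli → ℤ := fun v σ => if σ = Pauli.I then 1 else h v σ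
  have hw (v : V) (σ : Pauli) : w v σ = 1 ∨ w v σ = -1 := by
    by_cases hσ : σ = Pauli.I
    · simp [w, hσ]
    · simpa [w, hσ] using hh v σ hσ
  simpa using sum_mul_prod_le_card_sub_two_of_even_card_fiber M χ w hχ hw
    (fun v σ hσ => heven v σ fun hI => hσ (by simp [w, hI])) hprod
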